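/- arXiv:2604.18863 — 5 statements merged into one kernel-verified Lean document; each statement's English description precedes it below -/
import Mathlib

section
/- For clusters l = 1,…,N, let D_l be a real n_l × p matrix and V_l a real symmetric invertible n_l × n_l matrix; set A_l = D_lᵀ V_l⁻¹ D_l, I₀ = Σ_{l=1}^N A_l (assumed invertible), Δ = I₀⁻¹, H_{il} = D_i Δ D_lᵀ V_l⁻¹, and H_{ii} = D_i Δ D_iᵀ V_i⁻¹. Fix an index i and assume I₀ − A_i and I_{n_i} − H_{ii} are invertible. Then D_iᵀ V_i⁻¹ (I − H_{ii})⁻¹ [Σ_{l ≠ i} H_{il} V_l H_{il}ᵀ] ((I − H_{ii})⁻¹)ᵀ V_i⁻¹ D_i = A_i (I₀ − A_i)⁻¹ A_i. -/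
/-!
The cross-subject sum collapses to `D_i Δ (I₀ - A_i) Δ D_iᵀ`, because each term is
`D_i Δ A_l Δ D_iᵀ` and the `A_l` with `l ≠ i` add up to `I₀ - A_i`. The push-through identity
`(1 - H_ii) D_i (I₀ - A_i)⁻¹ = D_i Δ` turns `(1 - H_ii)⁻¹ D_i Δ` into `D_i (I₀ - A_i)⁻¹`, and by
symmetry of `Δ` and `(I₀ - A_i)⁻¹` the transposed factor becomes `(I₀ - A_i)⁻¹ D_iᵀ`. What is
left is `A_i (I₀ - A_i)⁻¹ (I₀ - A_i) (I₀ - A_i)⁻¹ A_i`.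
-/

open scoped Matrix
open Finset

namespace Matrix

theorem isSymm_sum {ι n α : Type*} [AddCommMonoid α] (s : Finset ι) {A : ι → Matrix n n α}
    (hA : ∀ l ∈ s, (A l).IsSymm) : (∑ l ∈ s, A l).IsSymm := by
  simp only [IsSymm, transpose_sum]
  exact sum_congr rfl fun l hl => (hA l hl).eq

variable {K : Type*} [CommRing K] {m p : Type*} [Fintype m]

theorem IsSymm.transpose_mul_mul {W : Matrix m m K} (hW : W.IsSymm) (D : Matrix m p K) :
    (Dᵀ * W * D).IsSymm := by
  simp only [IsSymm, transpose_mul, transpose_transpose, hW.eq, Matrix.mul_assoc]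

theorem IsSymm.mul_inv_mul_mul_inv_transpose [DecidableEq m] {V : Matrix m m K}
    (hV : V.IsSymm) (hVunit : IsUnit V) (B : Matrix p m K) :
    B * V⁻¹ * V * (B * V⁻¹)ᵀ = B * V⁻¹ * Bᵀ := by
  rw [nonsing_inv_mul_cancel_right _ _ ((isUnit_iff_isUnit_det V).mp hVunit), transpose_mul,
    hV.inv.eq, Matrix.mul_assoc]

theorem nonsing_inv_one_sub_mul_mul_eq [DecidableEq m] [Fintype p] [DecidableEq p]
    {X : Matrix m p K} {B : Matrix p m K} {I₀ Δ : Matrix p p K} (hΔ : Δ * I₀ = 1)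
    (hR : IsUnit (I₀ - B * X)) (hH : IsUnit (1 - X * Δ * B)) :
    (1 - X * Δ * B)⁻¹ * (X * Δ) = X * (I₀ - B * X)⁻¹ := by
  have hpush : (1 - X * Δ * B) * X = X * Δ * (I₀ - B * X) := by
    rw [Matrix.sub_mul, Matrix.one_mul, Matrix.mul_sub, Matrix.mul_assoc X Δ I₀, hΔ,
      Matrix.mul_one]
    simp only [Matrix.mul_assoc]
  have hright : (1 - X * Δ * B) * (X * (I₀ - B * X)⁻¹) = X * Δ := by
    rw [← Matrix.mul_assoc, hpush,
      mul_nonsing_inv_cancel_right _ _ ((isUnit_iff_isUnit_det _).mp hR)]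
  calc (1 - X * Δ * B)⁻¹ * (X * Δ)
      = (1 - X * Δ * B)⁻¹ * ((1 - X * Δ * B) * (X * (I₀ - B * X)⁻¹)) := by rw [hright]
    _ = X * (I₀ - B * X)⁻¹ :=
      nonsing_inv_mul_cancel_left _ _ ((isUnit_iff_isUnit_det _).mp hH)

theorem mul_mul_transpose_eq_of_mul_eq [Fintype p] (P : Matrix m m K) (X : Matrix m p K)
    {Δ S : Matrix p p K} (hΔ : Δ.IsSymm) (hS : S.IsSymm) (hPX : P * (X * Δ) = X * S)
    (M : Matrix p p K) :
    P * (X * Δ * M * Δ * Xᵀ) * Pᵀ = X * S * M * S * Xᵀ := by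
  have hPXt : Δ * Xᵀ * Pᵀ = S * Xᵀ := by
    simpa only [transpose_mul, hΔ.eq, hS.eq, Matrix.mul_assoc] using congrArg transpose hPX
  calc P * (X * Δ * M * Δ * Xᵀ) * Pᵀ = P * (X * Δ) * M * (Δ * Xᵀ * Pᵀ) := by
        simp only [Matrix.mul_assoc]
    _ = X * S * M * S * Xᵀ := by
        rw [hPX, hPXt]
        simp only [Matrix.mul_assoc]

end Matrix

/-- algebraic core of the direction-dependent overcorrection:
`D_iᵀ V_i⁻¹ (1 − H_{ii})⁻¹ [Σ_{l ≠ i} H_{il} V_l H_{il}ᵀ] ((1 − H_{ii})⁻¹)ᵀ V_i⁻¹ D_i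
  = A_i (I₀ − A_i)⁻¹ A_i`. -/
theorem overcorrection_algebraic_core
    {N p : ℕ} (n : Fin N → ℕ)
    (D : ∀ l, Matrix (Fin (n l)) (Fin p) ℝ)
    (V : ∀ l, Matrix (Fin (n l)) (Fin (n l)) ℝ)
    (hVsymm : ∀ l, (V l).IsSymm) (hVunit : ∀ l, IsUnit (V l))
    (A : Fin N → Matrix (Fin p) (Fin p) ℝ)
    (hA : ∀ l, A l = (D l)ᵀ * (V l)⁻¹ * D l)
    (I₀ : Matrix (Fin p) (Fin p) ℝ) (hI₀ : I₀ = ∑ l, A l)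
    (hI₀unit : IsUnit I₀)
    (Δ : Matrix (Fin p) (Fin p) ℝ) (hΔ : Δ = I₀⁻¹)
    (H : ∀ i l, Matrix (Fin (n i)) (Fin (n l)) ℝ)
    (hH : ∀ i l, H i l = D i * Δ * (D l)ᵀ * (V l)⁻¹)
    (i : Fin N)
    (hIA : IsUnit (I₀ - A i))
    (hIH : IsUnit ((1 : Matrix (Fin (n i)) (Fin (n i)) ℝ) - H i i)) :
    (D i)ᵀ * (V i)⁻¹ * (1 - H i i)⁻¹ *
        (∑ l ∈ univ.erase i, H i l * V l * (H i l)ᵀ) *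
        ((1 - H i i)⁻¹)ᵀ * (V i)⁻¹ * D i
      = A i * (I₀ - A i)⁻¹ * A i := by
  have hAsymm : ∀ l, (A l).IsSymm := fun l => hA l ▸ (hVsymm l).inv.transpose_mul_mul (D l)
  have hI₀symm : I₀.IsSymm := hI₀ ▸ Matrix.isSymm_sum univ fun l _ => hAsymm l
  have hΔsymm : Δ.IsSymm := hΔ ▸ hI₀symm.inv
  have hΔI₀ : Δ * I₀ = 1 :=
    hΔ ▸ Matrix.nonsing_inv_mul I₀ ((Matrix.isUnit_iff_isUnit_det I₀).mp hI₀unit)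
  have hterm : ∀ l, H i l * V l * (H i l)ᵀ = D i * Δ * A l * Δ * (D i)ᵀ := fun l => by
    rw [hH, (hVsymm l).mul_inv_mul_mul_inv_transpose (hVunit l), hA]
    simp only [Matrix.transpose_mul, Matrix.transpose_transpose, hΔsymm.eq, Matrix.mul_assoc]
  have hsum : ∑ l ∈ univ.erase i, H i l * V l * (H i l)ᵀ
      = D i * Δ * (I₀ - A i) * Δ * (D i)ᵀ := by
    rw [sum_congr rfl fun l _ => hterm l, ← Matrix.sum_mul, ← Matrix.sum_mul, ← Matrix.mul_sum,
      sum_erase_eq_sub (mem_univ i), ← hI₀]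
  have hlev : (1 - H i i)⁻¹ * (D i * Δ) = D i * (I₀ - A i)⁻¹ := by
    have hHi : H i i = D i * Δ * ((D i)ᵀ * (V i)⁻¹) := by rw [hH, Matrix.mul_assoc]
    rw [hHi] at hIH ⊢
    rw [hA i] at hIA ⊢
    exact Matrix.nonsing_inv_one_sub_mul_mul_eq hΔI₀ hIA hIH
  calc _ = (D i)ᵀ * (V i)⁻¹ * ((1 - H i i)⁻¹ * (D i * Δ * (I₀ - A i) * Δ * (D i)ᵀ) *
          ((1 - H i i)⁻¹)ᵀ) * (V i)⁻¹ * D i := by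
        rw [hsum]; simp only [Matrix.mul_assoc]
    _ = (D i)ᵀ * (V i)⁻¹ * D i * (I₀ - A i)⁻¹ * (D i)ᵀ * (V i)⁻¹ * D i := by
        rw [Matrix.mul_mul_transpose_eq_of_mul_eq _ _ hΔsymm (hI₀symm.sub (hAsymm i)).inv hlev]
        simp only [Matrix.mul_assoc,
          Matrix.nonsing_inv_mul_cancel_left _ _ ((Matrix.isUnit_iff_isUnit_det _).mp hIA)]
    _ = A i * (I₀ - A i)⁻¹ * A i := by
        rw [hA i]; simp only [Matrix.mul_assoc]
end

section
/- For clusters i = 1,…,N, let D_i be a real n_i × p matrix and V_i a real symmetric invertible n_i × n_i matrix; set A_i = D_iᵀ V_i⁻¹ D_i, I₀ = Σ_i A_i (assumed invertible), Δ = I₀⁻¹, H_{il} = D_i Δ D_lᵀ V_l⁻¹, H_{ii} = D_i Δ D_iᵀ V_i⁻¹, and assume I₀ − A_i and I_{n_i} − H_{ii} are invertible for every i. Let (Ω, F, μ) be a probability space and let e_1,…,e_N be independent random vectors, e_i taking values in ℝ^{n_i}, with E[e_i] = 0, square-integrable components, and E[e_i e_iᵀ] = V_i. Define r_i = (I − H_{ii})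 e_i − Σ_{l ≠ i} H_{il} e_l and the corrected score f_i = D_iᵀ V_i⁻¹ (I − H_{ii})⁻¹ r_i. Then E[f_i f_iᵀ] = A_i + A_i (I₀ − A_i)⁻¹ A_i for every i, and consequently Σ_{i=1}^N E[f_i f_iᵀ] = I₀ + Σ_{i=1}^N A_i (I₀ − A_i)⁻¹ A_i. -/
/-!
With `M = D_iᵀ V_i⁻¹ (1 - H_ii)⁻¹` one has `M (1 - H_ii) = D_iᵀ V_i⁻¹`, so the corrected score is
`f_i = D_iᵀ V_i⁻¹ e_i - ∑_{l ≠ i} M H_il e_l`, a sum of linear images of the mutually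
uncorrelated `e_l`. Hence `E[f_i f_iᵀ] = A_i + ∑_{l ≠ i} (M H_il) V_l (M H_il)ᵀ`. The push-through
identity `(1 - XY)⁻¹ X = X (1 - YX)⁻¹` gives `M D_i Δ = A_i (I₀ - A_i)⁻¹ =: G`, so the `l`-th
term is `G A_l Gᵀ` and the sum over `l ≠ i` is `G (I₀ - A_i) Gᵀ = A_i (I₀ - A_i)⁻¹ A_i`.
-/

open scoped Matrix
open Finset MeasureTheory ProbabilityTheory

namespace Matrix

variable {l m n : Type*} [Fintype n] [DecidableEq n] {R : Type*} [CommRing R]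

theorem inv_one_sub_mul_mul_comm [Fintype m] [DecidableEq m] (X : Matrix m n R)
    (Y : Matrix n m R) : (1 - X * Y)⁻¹ * X = X * (1 - Y * X)⁻¹ := by
  by_cases h : IsUnit (1 - X * Y).det
  · have h' : IsUnit (1 - Y * X).det := det_one_sub_mul_comm X Y ▸ h
    have hcomm : (1 - X * Y) * X = X * (1 - Y * X) := by
      simp only [Matrix.sub_mul, Matrix.mul_sub, Matrix.one_mul, Matrix.mul_one, Matrix.mul_assoc]
    calc (1 - X * Y)⁻¹ * X = (1 - X * Y)⁻¹ * ((1 - X * Y) * X) * (1 - Y * X)⁻¹ := by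
          rw [hcomm]
          simp only [Matrix.mul_assoc]
          rw [mul_nonsing_inv _ h', Matrix.mul_one]
      _ = X * (1 - Y * X)⁻¹ := by rw [← Matrix.mul_assoc, nonsing_inv_mul _ h, Matrix.one_mul]
  -- Otherwise both inverses are the junk value `0`, by Sylvester's determinant identity.
  · have h' : ¬IsUnit (1 - Y * X).det := det_one_sub_mul_comm X Y ▸ h
    rw [nonsing_inv_apply_not_isUnit _ h, nonsing_inv_apply_not_isUnit _ h', Matrix.zero_mul,
      Matrix.mul_zero]

theorem mul_inv_one_sub_mul_mul_inv [Fintype m] [DecidableEq m] {J : Matrix m m R}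
    (hJ : IsUnit J) (X : Matrix m n R) (D : Matrix n m R) :
    X * (1 - D * J⁻¹ * X)⁻¹ * D * J⁻¹ = X * D * (J - X * D)⁻¹ := by
  have hJJ : J * J⁻¹ = 1 := mul_nonsing_inv _ ((isUnit_iff_isUnit_det J).1 hJ)
  calc X * (1 - D * J⁻¹ * X)⁻¹ * D * J⁻¹ = X * D * ((1 - J⁻¹ * X * D)⁻¹ * J⁻¹) := by
        rw [Matrix.mul_assoc D, Matrix.mul_assoc X, inv_one_sub_mul_mul_comm, ← Matrix.mul_assoc,
          Matrix.mul_assoc J⁻¹]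
        simp only [Matrix.mul_assoc]
    _ = X * D * (J - X * D)⁻¹ := by
        rw [← mul_inv_rev, Matrix.mul_sub, Matrix.mul_one, ← Matrix.mul_assoc, ← Matrix.mul_assoc,
          hJJ, Matrix.one_mul]

theorem mul_inv_mul_mul_transpose_mul_inv {V : Matrix n n R} (hV : V.IsSymm) (hVu : IsUnit V)
    (B C : Matrix l n R) : B * V⁻¹ * V * (C * V⁻¹)ᵀ = B * V⁻¹ * Cᵀ := by
  rw [Matrix.mul_assoc B, nonsing_inv_mul _ ((isUnit_iff_isUnit_det V).1 hVu), Matrix.mul_one,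
    transpose_mul, hV.inv.eq, Matrix.mul_assoc]

theorem isSymm_transpose_mul_inv_mul {V : Matrix n n R} (hV : V.IsSymm) (D : Matrix n m R) :
    (Dᵀ * V⁻¹ * D).IsSymm := by
  rw [IsSymm, transpose_mul, transpose_mul, hV.inv.eq, transpose_transpose, Matrix.mul_assoc]

end Matrix

section CrossMoment

variable {Ω : Type*} [MeasurableSpace Ω] {μ : Measure Ω} {κ κ' q q' : Type*}

variable (μ) in
noncomputable def crossMoment (X : Ω → κ → ℝ) (Y : Ω → κ' → ℝ) : Matrix κ κ' ℝ :=
  Matrix.of fun j k => ∫ ω, X ω j * Y ω k ∂μ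

theorem memLp_mulVec_apply [Fintype κ] {p : ENNReal} {X : Ω → κ → ℝ}
    (hX : ∀ j, MemLp (X · j) p μ) (P : Matrix q κ ℝ) (s : q) :
    MemLp (fun ω => (P *ᵥ X ω) s) p μ := by
  simp only [Matrix.mulVec, dotProduct]
  exact memLp_finsetSum univ fun j _ => (hX j).const_mul (P s j)

theorem crossMoment_mulVec_mulVec [Fintype κ] [Fintype κ'] {X : Ω → κ → ℝ} {Y : Ω → κ' → ℝ}
    (hXY : ∀ j k, Integrable (fun ω => X ω j * Y ω k) μ) (P : Matrix q κ ℝ) (Q : Matrix q' κ' ℝ) :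
    crossMoment μ (fun ω => P *ᵥ X ω) (fun ω => Q *ᵥ Y ω) = P * crossMoment μ X Y * Qᵀ := by
  ext s t
  have hexpand : ∀ ω, (P *ᵥ X ω) s * (Q *ᵥ Y ω) t
      = ∑ j, ∑ k, P s j * Q t k * (X ω j * Y ω k) := fun ω => by
    simp only [Matrix.mulVec, dotProduct, sum_mul_sum]
    exact sum_congr rfl fun j _ => sum_congr rfl fun k _ => by ring
  simp only [crossMoment, Matrix.of_apply, hexpand, Matrix.mul_apply, Matrix.transpose_apply,
    sum_mul]
  rw [integral_finsetSum _ fun j _ => integrable_finsetSum _ fun k _ => (hXY j k).const_mul _,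
    sum_comm]
  refine sum_congr rfl fun j _ => ?_
  rw [integral_finsetSum _ fun k _ => (hXY j k).const_mul _]
  exact sum_congr rfl fun k _ => by rw [integral_const_mul]; ring

theorem crossMoment_sum_sum {ι ι' : Type*} (s : Finset ι) (s' : Finset ι') {X : ι → Ω → κ → ℝ}
    {Y : ι' → Ω → κ' → ℝ} (hXY : ∀ l m j k, Integrable (fun ω => X l ω j * Y m ω k) μ) :
    crossMoment μ (fun ω => ∑ l ∈ s, X l ω) (fun ω => ∑ m ∈ s', Y m ω)
      = ∑ l ∈ s, ∑ m ∈ s', crossMoment μ (X l) (Y m) := by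
  ext j k
  simp only [crossMoment, Matrix.of_apply, Matrix.sum_apply, Finset.sum_apply, sum_mul_sum]
  rw [integral_finsetSum _ fun l _ => integrable_finsetSum _ fun m _ => hXY l m j k]
  exact sum_congr rfl fun l _ => integral_finsetSum _ fun m _ => hXY l m j k

theorem crossMoment_eq_zero_of_indepFun [IsFiniteMeasure μ] {X : Ω → κ → ℝ} {Y : Ω → κ' → ℝ}
    (hXY : IndepFun X Y μ) (hX : ∀ j, AEStronglyMeasurable (X · j) μ)
    (hY : ∀ k, AEStronglyMeasurable (Y · k) μ) (hX0 : ∀ j, ∫ ω, X ω j ∂μ = 0) :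
    crossMoment μ X Y = 0 := by
  ext j k
  have hjk : IndepFun (X · j) (Y · k) μ :=
    hXY.comp (measurable_pi_apply j) (measurable_pi_apply k)
  simp only [crossMoment, Matrix.of_apply, Matrix.zero_apply,
    hjk.integral_fun_mul_eq_mul_integral (hX j) (hY k), hX0, zero_mul]

theorem crossMoment_sum_mulVec_of_uncorrelated {ι : Type*} [Fintype ι] [DecidableEq ι]
    {κ : ι → Type*} [∀ l, Fintype (κ l)] {X : ∀ l, Ω → κ l → ℝ}
    (hX : ∀ l j, MemLp (X l · j) 2 μ) (huncorr : ∀ l m, l ≠ m → crossMoment μ (X l) (X m) = 0)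
    (C : ∀ l, Matrix q (κ l) ℝ) :
    crossMoment μ (fun ω => ∑ l, C l *ᵥ X l ω) (fun ω => ∑ l, C l *ᵥ X l ω)
      = ∑ l, C l * crossMoment μ (X l) (X l) * (C l)ᵀ := by
  have hint : ∀ l m j k, Integrable (fun ω => X l ω j * X m ω k) μ := fun l m j k =>
    (hX l j).integrable_mul (hX m k)
  have hint_mulVec : ∀ l m s t, Integrable (fun ω => (C l *ᵥ X l ω) s * (C m *ᵥ X m ω) t) μ :=
    fun l m s t =>
      (memLp_mulVec_apply (hX l) (C l) s).integrable_mul (memLp_mulVec_apply (hX m) (C m) t)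
  rw [crossMoment_sum_sum _ _ hint_mulVec]
  refine sum_congr rfl fun l _ => ?_
  rw [sum_eq_single l (fun m _ hml => ?_) (by simp)]
  · exact crossMoment_mulVec_mulVec (hint l l) (C l) (C l)
  · rw [crossMoment_mulVec_mulVec (hint l m), huncorr l m hml.symm, Matrix.mul_zero,
      Matrix.zero_mul]

end CrossMoment

open Matrix

theorem Fintype.sum_apply_update {ι : Type*} [Fintype ι] [DecidableEq ι] {κ : ι → Type*}
    {M : Type*} [AddCommMonoid M] (g : ∀ l, κ l → M) (c : ∀ l, κ l) (i : ι) (x : κ i) :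
    ∑ l, g l (Function.update c i x l) = g i x + ∑ l ∈ univ.erase i, g l (c l) := by
  rw [← add_sum_erase _ _ (mem_univ i), Function.update_self]
  exact congrArg _ <| Finset.sum_congr rfl fun l hl => by
    rw [Function.update_of_ne (ne_of_mem_erase hl)]

theorem leverage_corrected_middle_matrix_eq {ι : Type*} [Fintype ι] [DecidableEq ι]
    {R : Type*} [CommRing R] {p : Type*} [Fintype p] [DecidableEq p]
    {n : ι → Type*} [∀ l, Fintype (n l)] [∀ l, DecidableEq (n l)]
    (D : ∀ l, Matrix (n l) p R) (V : ∀ l, Matrix (n l) (n l) R)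
    (hVsymm : ∀ l, (V l).IsSymm) (hVunit : ∀ l, IsUnit (V l))
    (A : ι → Matrix p p R) (hA : ∀ l, A l = (D l)ᵀ * (V l)⁻¹ * D l)
    (I₀ : Matrix p p R) (hI₀ : I₀ = ∑ l, A l) (hI₀unit : IsUnit I₀)
    (Δ : Matrix p p R) (hΔ : Δ = I₀⁻¹)
    (H : ∀ i l, Matrix (n i) (n l) R) (hH : ∀ i l, H i l = D i * Δ * (D l)ᵀ * (V l)⁻¹)
    (i : ι) (hIA : IsUnit (I₀ - A i)) :
    (D i)ᵀ * (V i)⁻¹ * V i * ((D i)ᵀ * (V i)⁻¹)ᵀ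
        + ∑ l ∈ univ.erase i, (D i)ᵀ * (V i)⁻¹ * (1 - H i i)⁻¹ * H i l * V l
          * ((D i)ᵀ * (V i)⁻¹ * (1 - H i i)⁻¹ * H i l)ᵀ
      = A i + A i * (I₀ - A i)⁻¹ * A i := by
  set G := A i * (I₀ - A i)⁻¹ with hG
  have hAsymm : ∀ l, (A l).IsSymm := fun l => hA l ▸ isSymm_transpose_mul_inv_mul (hVsymm l) (D l)
  have hgain : (D i)ᵀ * (V i)⁻¹ * (1 - H i i)⁻¹ * D i * Δ = G := by
    rw [hH, hΔ, Matrix.mul_assoc (D i * I₀⁻¹), mul_inv_one_sub_mul_mul_inv hI₀unit, hG, hA]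
  have hterm : ∀ l, (D i)ᵀ * (V i)⁻¹ * (1 - H i i)⁻¹ * H i l * V l
      * ((D i)ᵀ * (V i)⁻¹ * (1 - H i i)⁻¹ * H i l)ᵀ = G * A l * Gᵀ := fun l => by
    have hQ : (D i)ᵀ * (V i)⁻¹ * (1 - H i i)⁻¹ * H i l = G * (D l)ᵀ * (V l)⁻¹ := by
      rw [← hgain, hH i l]
      simp only [Matrix.mul_assoc]
    rw [hQ, mul_inv_mul_mul_transpose_mul_inv (hVsymm l) (hVunit l), hA l, transpose_mul,
      transpose_transpose]
    simp only [Matrix.mul_assoc]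
  have hrest : ∑ l ∈ univ.erase i, A l = I₀ - A i := by
    rw [hI₀, ← add_sum_erase _ _ (mem_univ i), add_sub_cancel_left]
  have hSsymm : (I₀ - A i).IsSymm := by
    refine IsSymm.sub ?_ (hAsymm i)
    rw [hI₀, IsSymm, transpose_sum]
    exact sum_congr rfl fun l _ => (hAsymm l).eq
  calc _ = A i + G * (I₀ - A i) * Gᵀ := by
        rw [mul_inv_mul_mul_transpose_mul_inv (hVsymm i) (hVunit i), transpose_transpose, ← hA,
          sum_congr rfl fun l _ => hterm l, ← hrest, mul_sum, sum_mul]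
    _ = A i + A i * (I₀ - A i)⁻¹ * A i := by
        rw [mul_inv_mul_mul_transpose_mul_inv hSsymm hIA, (hAsymm i).eq]

theorem overcorrection_expected_middle_matrix_general
    {N p : ℕ} (n : Fin N → ℕ)
    (D : ∀ l, Matrix (Fin (n l)) (Fin p) ℝ)
    (V : ∀ l, Matrix (Fin (n l)) (Fin (n l)) ℝ)
    (hVsymm : ∀ l, (V l).IsSymm) (hVunit : ∀ l, IsUnit (V l))
    (A : Fin N → Matrix (Fin p) (Fin p) ℝ)
    (hA : ∀ l, A l = (D l)ᵀ * (V l)⁻¹ * D l)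
    (I₀ : Matrix (Fin p) (Fin p) ℝ) (hI₀ : I₀ = ∑ l, A l)
    (hI₀unit : IsUnit I₀)
    (Δ : Matrix (Fin p) (Fin p) ℝ) (hΔ : Δ = I₀⁻¹)
    (H : ∀ i l, Matrix (Fin (n i)) (Fin (n l)) ℝ)
    (hH : ∀ i l, H i l = D i * Δ * (D l)ᵀ * (V l)⁻¹)
    (hIA : ∀ i, IsUnit (I₀ - A i))
    (hIH : ∀ i, IsUnit ((1 : Matrix (Fin (n i)) (Fin (n i)) ℝ) - H i i))
    {Ω : Type*} [MeasurableSpace Ω] (μ : Measure Ω) [IsProbabilityMeasure μ]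
    (e : ∀ i, Ω → Fin (n i) → ℝ)
    (hindep : iIndepFun e μ)
    (hL2 : ∀ i j, MemLp (fun ω => e i ω j) 2 μ)
    (hmean : ∀ i j, ∫ ω, e i ω j ∂μ = 0)
    (hcov : ∀ i, ∀ j k, ∫ ω, e i ω j * e i ω k ∂μ = V i j k)
    (r : ∀ i, Ω → Fin (n i) → ℝ)
    (hr : ∀ i ω, r i ω =
      (1 - H i i) *ᵥ e i ω - ∑ l ∈ univ.erase i, H i l *ᵥ e l ω)
    (f : ∀ i, Ω → Fin p → ℝ)
    (hf : ∀ i ω, f i ω = ((D i)ᵀ * (V i)⁻¹ * (1 - H i i)⁻¹) *ᵥ r i ω) :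
    (∀ i, (Matrix.of fun s t => ∫ ω, f i ω s * f i ω t ∂μ)
        = A i + A i * (I₀ - A i)⁻¹ * A i) ∧
      ∑ i, (Matrix.of fun s t => ∫ ω, f i ω s * f i ω t ∂μ)
        = I₀ + ∑ i, A i * (I₀ - A i)⁻¹ * A i := by
  have hcov' : ∀ l, crossMoment μ (e l) (e l) = V l := fun l => Matrix.ext (hcov l)
  have huncorr : ∀ l m, l ≠ m → crossMoment μ (e l) (e m) = 0 := fun l m hlm =>
    crossMoment_eq_zero_of_indepFun (hindep.indepFun hlm)
      (fun j => (hL2 l j).aestronglyMeasurable) (fun k => (hL2 m k).aestronglyMeasurable) (hmean l)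
  have hcluster : ∀ i, crossMoment μ (f i) (f i) = A i + A i * (I₀ - A i)⁻¹ * A i := by
    intro i
    set P := (D i)ᵀ * (V i)⁻¹
    set Q := fun l => P * (1 - H i i)⁻¹ * H i l
    have hf_sum : f i = fun ω => ∑ l, Function.update (fun l => -Q l) i P l *ᵥ e l ω := by
      funext ω
      rw [Fintype.sum_apply_update (fun l C => C *ᵥ e l ω), hf, hr, mulVec_sub, mulVec_mulVec,
        Matrix.mul_assoc P, nonsing_inv_mul _ ((isUnit_iff_isUnit_det _).1 (hIH i)),
        Matrix.mul_one, mulVec_sum, sub_eq_add_neg, ← sum_neg_distrib]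
      simp only [P, Q, neg_mulVec, mulVec_mulVec]
    rw [hf_sum, crossMoment_sum_mulVec_of_uncorrelated hL2 huncorr,
      Fintype.sum_apply_update (fun l C => C * crossMoment μ (e l) (e l) * Cᵀ)]
    simp only [hcov', Matrix.neg_mul, Matrix.mul_neg, transpose_neg, neg_neg]
    exact leverage_corrected_middle_matrix_eq D V hVsymm hVunit A hA I₀ hI₀ hI₀unit Δ hΔ H hH i
      (hIA i)
  exact ⟨hcluster, (sum_congr rfl fun i _ => hcluster i).trans (by rw [sum_add_distrib, ← hI₀])⟩

/-- Theorem 2, direction-dependent overcorrection: under correctly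
specified working covariance `E[e_i e_iᵀ] = V_i` and the first-order residual
expansion, the corrected scores `f_i = D_iᵀ V_i⁻¹ (1 − H_{ii})⁻¹ r_i` satisfy
`E[f_i f_iᵀ] = A_i + A_i (I₀ − A_i)⁻¹ A_i` for every `i`, and summing over clusters
`Σ_i E[f_i f_iᵀ] = I₀ + Σ_i A_i (I₀ − A_i)⁻¹ A_i`. -/
theorem overcorrection_expected_middle_matrix
    {N p : ℕ} (n : Fin N → ℕ)
    (D : ∀ l, Matrix (Fin (n l)) (Fin p) ℝ)
    (V : ∀ l, Matrix (Fin (n l)) (Fin (n l)) ℝ)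
    (hVsymm : ∀ l, (V l).IsSymm) (hVunit : ∀ l, IsUnit (V l))
    (A : Fin N → Matrix (Fin p) (Fin p) ℝ)
    (hA : ∀ l, A l = (D l)ᵀ * (V l)⁻¹ * D l)
    (I₀ : Matrix (Fin p) (Fin p) ℝ) (hI₀ : I₀ = ∑ l, A l)
    (hI₀unit : IsUnit I₀)
    (Δ : Matrix (Fin p) (Fin p) ℝ) (hΔ : Δ = I₀⁻¹)
    (H : ∀ i l, Matrix (Fin (n i)) (Fin (n l)) ℝ)
    (hH : ∀ i l, H i l = D i * Δ * (D l)ᵀ * (V l)⁻¹)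
    (hIA : ∀ i, IsUnit (I₀ - A i))
    (hIH : ∀ i, IsUnit ((1 : Matrix (Fin (n i)) (Fin (n i)) ℝ) - H i i))
    {Ω : Type*} [MeasurableSpace Ω] (μ : Measure Ω) [IsProbabilityMeasure μ]
    (e : ∀ i, Ω → Fin (n i) → ℝ)
    (hmeas : ∀ i, Measurable (e i))
    (hindep : iIndepFun e μ)
    (hL2 : ∀ i j, MemLp (fun ω => e i ω j) 2 μ)
    (hmean : ∀ i j, ∫ ω, e i ω j ∂μ = 0)
    (hcov : ∀ i, ∀ j k, ∫ ω, e i ω j * e i ω k ∂μ = V i j k)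
    (r : ∀ i, Ω → Fin (n i) → ℝ)
    (hr : ∀ i ω, r i ω =
      (1 - H i i) *ᵥ e i ω - ∑ l ∈ univ.erase i, H i l *ᵥ e l ω)
    (f : ∀ i, Ω → Fin p → ℝ)
    (hf : ∀ i ω, f i ω = ((D i)ᵀ * (V i)⁻¹ * (1 - H i i)⁻¹) *ᵥ r i ω) :
    (∀ i, (Matrix.of fun s t => ∫ ω, f i ω s * f i ω t ∂μ)
        = A i + A i * (I₀ - A i)⁻¹ * A i) ∧
      ∑ i, (Matrix.of fun s t => ∫ ω, f i ω s * f i ω t ∂μ)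
        = I₀ + ∑ i, A i * (I₀ - A i)⁻¹ * A i :=
  overcorrection_expected_middle_matrix_general n D V hVsymm hVunit A hA I₀ hI₀ hI₀unit Δ hΔ H hH
    hIA hIH μ e hindep hL2 hmean hcov r hr f hf
end

section
/- Let a₀ > 0 and a₁ > 0 be real numbers and let N₀, N₁ ≥ 2 be natural numbers. In the space of real 2×2 matrices set A₀ = a₀·[[1,0],[0,0]], A₁ = a₁·[[1,1],[1,1]], and I₀ = N₀·A₀ + N₁·A₁. Then I₀ − A₀ and I₀ − A₁ are invertible, and the overcorrection matrix B_lev := N₀·A₀(I₀ − A₀)⁻¹A₀ + N₁·A₁(I₀ − A₁)⁻¹A₁ satisfies B_lev = (N₀/(N₀ − 1))·A₀ + (N₁/(N₁ − 1))·A₁. -/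
/-!
Write `M₀ = I₀ - A₀ = (N₀ - 1) A₀ + N₁ A₁`. The matrix `E = !![1, 0; -1, 0]` satisfies
`A₀ E = A₀` and `A₁ E = 0`, so `M₀ E = (N₀ - 1) A₀`; hence `M₀⁻¹ A₀ = E / (N₀ - 1)`
and `A₀ M₀⁻¹ A₀ = A₀ E / (N₀ - 1) = A₀ / (N₀ - 1)`. The treated block is the same with
`E = !![0, 0; 1, 1]`, which fixes `A₁` and is killed by `A₀`. Invertibility is a `2 × 2`
determinant: `det (s A₀ + t A₁) = s t a₀ a₁`.
-/

namespace Matrix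

theorem mul_inv_smul_add_mul {K n : Type*} [Field K] [Fintype n] [DecidableEq n]
    {A B E : Matrix n n K} {c : K} (hc : c ≠ 0) (hM : IsUnit (c • A + B))
    (hAE : A * E = A) (hBE : B * E = 0) :
    A * (c • A + B)⁻¹ * A = c⁻¹ • A := by
  have hME : (c • A + B) * (c⁻¹ • E) = A := by
    rw [add_mul, mul_smul_comm, smul_mul_assoc, hAE, mul_smul_comm, hBE, smul_zero, add_zero,
      smul_smul, inv_mul_cancel₀ hc, one_smul]
  calc A * (c • A + B)⁻¹ * A
      = A * ((c • A + B)⁻¹ * ((c • A + B) * (c⁻¹ • E))) := by rw [hME, mul_assoc]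
    _ = A * (c⁻¹ • E) := by
      rw [nonsing_inv_mul_cancel_left _ _ ((isUnit_iff_isUnit_det _).mp hM)]
    _ = c⁻¹ • A := by rw [mul_smul_comm, hAE]

theorem det_smul_add_smul_fin_two {R : Type*} [CommRing R] (s t : R) :
    (s • !![1, 0; 0, 0] + t • !![1, 1; 1, 1] : Matrix (Fin 2) (Fin 2) R).det = s * t := by
  simp [det_fin_two, add_mul]

end Matrix

open Matrix in
/-- key computation of Corollary 1: in the 2×2 intercept–treatment
design with `A₀ = a₀·[[1,0],[0,0]]`, `A₁ = a₁·[[1,1],[1,1]]`, and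
`I₀ = N₀·A₀ + N₁·A₁` (`a₀, a₁ > 0`, `N₀, N₁ ≥ 2`), the matrices `I₀ − A₀` and
`I₀ − A₁` are invertible, and
`N₀·A₀(I₀ − A₀)⁻¹A₀ + N₁·A₁(I₀ − A₁)⁻¹A₁ = (N₀/(N₀−1))·A₀ + (N₁/(N₁−1))·A₁`. -/
theorem overcorrection_two_by_two
    (a₀ a₁ : ℝ) (ha₀ : 0 < a₀) (ha₁ : 0 < a₁)
    (N₀ N₁ : ℕ) (hN₀ : 2 ≤ N₀) (hN₁ : 2 ≤ N₁)
    (A₀ A₁ I₀ : Matrix (Fin 2) (Fin 2) ℝ)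
    (hA₀ : A₀ = a₀ • !![1, 0; 0, 0]) (hA₁ : A₁ = a₁ • !![1, 1; 1, 1])
    (hI₀ : I₀ = (N₀ : ℝ) • A₀ + (N₁ : ℝ) • A₁) :
    IsUnit (I₀ - A₀) ∧ IsUnit (I₀ - A₁) ∧
      (N₀ : ℝ) • (A₀ * (I₀ - A₀)⁻¹ * A₀) + (N₁ : ℝ) • (A₁ * (I₀ - A₁)⁻¹ * A₁)
        = ((N₀ : ℝ) / ((N₀ : ℝ) - 1)) • A₀ + ((N₁ : ℝ) / ((N₁ : ℝ) - 1)) • A₁ := by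
  have hn₀ : (1 : ℝ) < N₀ := by exact_mod_cast hN₀
  have hn₁ : (1 : ℝ) < N₁ := by exact_mod_cast hN₁
  have unit (s t : ℝ) (hs : s ≠ 0) (ht : t ≠ 0) : IsUnit (s • A₀ + t • A₁) := by
    rw [isUnit_iff_isUnit_det, hA₀, hA₁, smul_smul, smul_smul, det_smul_add_smul_fin_two]
    exact (mul_ne_zero (mul_ne_zero hs ha₀.ne') (mul_ne_zero ht ha₁.ne')).isUnit
  have e₀ : I₀ - A₀ = ((N₀ : ℝ) - 1) • A₀ + (N₁ : ℝ) • A₁ := by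
    rw [hI₀, sub_smul, one_smul]; abel
  have e₁ : I₀ - A₁ = ((N₁ : ℝ) - 1) • A₁ + (N₀ : ℝ) • A₀ := by
    rw [hI₀, sub_smul, one_smul]; abel
  have hu₀ : IsUnit (I₀ - A₀) := e₀ ▸ unit _ _ (by linarith) (by positivity)
  have hu₁ : IsUnit (I₀ - A₁) := by
    rw [e₁, add_comm]; exact unit _ _ (by positivity) (by linarith)
  have hA₀E₀ : A₀ * !![1, 0; -1, 0] = A₀ := by
    rw [hA₀, smul_mul_assoc, mul_fin_two]; norm_num
  have hA₁E₀ : (N₁ : ℝ) • A₁ * !![1, 0; -1, 0] = 0 := by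
    rw [hA₁, smul_mul_assoc, smul_mul_assoc, mul_fin_two]; norm_num; exact (eta_fin_two 0).symm
  have hA₁E₁ : A₁ * !![0, 0; 1, 1] = A₁ := by
    rw [hA₁, smul_mul_assoc, mul_fin_two]; norm_num
  have hA₀E₁ : (N₀ : ℝ) • A₀ * !![0, 0; 1, 1] = 0 := by
    rw [hA₀, smul_mul_assoc, smul_mul_assoc, mul_fin_two]; norm_num; exact (eta_fin_two 0).symm
  refine ⟨hu₀, hu₁, ?_⟩
  rw [e₀] at hu₀ ⊢
  rw [e₁] at hu₁ ⊢
  rw [mul_inv_smul_add_mul (by linarith) hu₀ hA₀E₀ hA₁E₀,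
    mul_inv_smul_add_mul (by linarith) hu₁ hA₁E₁ hA₀E₁, smul_smul, smul_smul,
    div_eq_mul_inv, div_eq_mul_inv]
end

section
/- Let a₀ > 0 and a₁ > 0 be real numbers and let N₀, N₁ ≥ 2 be natural numbers. In the space of real 2×2 matrices set A₀ = a₀·[[1,0],[0,0]], A₁ = a₁·[[1,1],[1,1]], I₀ = N₀·A₀ + N₁·A₁, and B_lev = N₀·A₀(I₀ − A₀)⁻¹A₀ + N₁·A₁(I₀ − A₁)⁻¹A₁. Then the spectrum (over ℝ) of the matrix I₀⁻¹(I₀ + B_lev) is the set {N₀/(N₀ − 1), N₁/(N₁ − 1)}, and its largest element equals N_min/(N_min − 1), where N_min = min(N₀, N₁). -/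
/-!
With `e₀ = (1, 0)` and `v = (1, 1)`, every matrix in sight has the form `c₀ • e₀e₀ᵀ + c₁ • vvᵀ`,
whose inverse has leverages `e₀ᵀ I⁻¹ e₀ = 1 / c₀` and `vᵀ I⁻¹ v = 1 / c₁`. Deleting one subject of
group `g` lowers that group's weight from `N_g a_g` to `(N_g - 1) a_g`, so
`N_g A_g (I₀ - A_g)⁻¹ A_g = N_g / (N_g - 1) • A_g`. Thus `I₀ + B_lev` is again of this form, and for
two such matrices `I⁻¹ J` is lower triangular with the weight ratios `1 + 1 / (N_g - 1)` on its
diagonal. The largest one belongs to the smaller group since `x ↦ x / (x - 1)` decreases on `(1, ∞)`.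
-/

open Matrix

theorem spectrum_lowerTriangular_fin_two {K : Type*} [Field K] (a b c : K) :
    spectrum K !![a, 0; c, b] = {a, b} := by
  ext x
  rw [spectrum.mem_iff, isUnit_iff_isUnit_det, isUnit_iff_ne_zero, not_not,
    Algebra.algebraMap_eq_smul_one, Set.mem_insert_iff, Set.mem_singleton_iff]
  have hdet : (x • (1 : Matrix (Fin 2) (Fin 2) K) - !![a, 0; c, b]).det = (x - a) * (x - b) := by
    simp [det_fin_two, one_apply]
  rw [hdet, mul_eq_zero, sub_eq_zero, sub_eq_zero]

section TwoGroupInfo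

variable {K : Type*} [Field K]

def twoGroupInfo (c₀ c₁ : K) : Matrix (Fin 2) (Fin 2) K :=
  c₀ • !![1, 0; 0, 0] + c₁ • !![1, 1; 1, 1]

theorem twoGroupInfo_eq (c₀ c₁ : K) : twoGroupInfo c₀ c₁ = !![c₀ + c₁, c₁; c₁, c₁] := by
  ext i j; fin_cases i <;> fin_cases j <;> simp [twoGroupInfo]

theorem twoGroupInfo_add (c₀ c₁ d₀ d₁ : K) :
    twoGroupInfo c₀ c₁ + twoGroupInfo d₀ d₁ = twoGroupInfo (c₀ + d₀) (c₁ + d₁) := by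
  simp only [twoGroupInfo, add_smul]; abel

theorem twoGroupInfo_sub_smul_left (c₀ c₁ a : K) :
    twoGroupInfo c₀ c₁ - a • !![1, 0; 0, 0] = twoGroupInfo (c₀ - a) c₁ := by
  simp only [twoGroupInfo, sub_smul]; abel

theorem twoGroupInfo_sub_smul_right (c₀ c₁ a : K) :
    twoGroupInfo c₀ c₁ - a • !![1, 1; 1, 1] = twoGroupInfo c₀ (c₁ - a) := by
  simp only [twoGroupInfo, sub_smul]; abel

variable {c₀ c₁ : K}

theorem inv_twoGroupInfo (hc₀ : c₀ ≠ 0) (hc₁ : c₁ ≠ 0) :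
    (twoGroupInfo c₀ c₁)⁻¹ = !![c₀⁻¹, -c₀⁻¹; -c₀⁻¹, c₀⁻¹ + c₁⁻¹] := by
  refine inv_eq_right_inv ?_
  rw [twoGroupInfo_eq]
  ext i j; fin_cases i <;> fin_cases j <;> simp [mul_apply, Fin.sum_univ_two] <;> field_simp <;> ring

theorem mul_inv_twoGroupInfo_mul_left (hc₀ : c₀ ≠ 0) (hc₁ : c₁ ≠ 0) :
    !![1, 0; 0, 0] * (twoGroupInfo c₀ c₁)⁻¹ * !![1, 0; 0, 0] = c₀⁻¹ • !![(1 : K), 0; 0, 0] := by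
  rw [inv_twoGroupInfo hc₀ hc₁]
  ext i j; fin_cases i <;> fin_cases j <;> simp [mul_apply, Fin.sum_univ_two]

theorem mul_inv_twoGroupInfo_mul_right (hc₀ : c₀ ≠ 0) (hc₁ : c₁ ≠ 0) :
    !![1, 1; 1, 1] * (twoGroupInfo c₀ c₁)⁻¹ * !![1, 1; 1, 1] = c₁⁻¹ • !![(1 : K), 1; 1, 1] := by
  rw [inv_twoGroupInfo hc₀ hc₁]
  ext i j; fin_cases i <;> fin_cases j <;> simp [mul_apply, Fin.sum_univ_two]

theorem inv_twoGroupInfo_mul_twoGroupInfo (hc₀ : c₀ ≠ 0) (hc₁ : c₁ ≠ 0) (d₀ d₁ : K) :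
    (twoGroupInfo c₀ c₁)⁻¹ * twoGroupInfo d₀ d₁ =
      !![d₀ / c₀, 0; d₁ / c₁ - d₀ / c₀, d₁ / c₁] := by
  rw [inv_twoGroupInfo hc₀ hc₁, twoGroupInfo_eq]
  ext i j; fin_cases i <;> fin_cases j <;> simp [mul_apply, Fin.sum_univ_two] <;> ring

theorem smul_mul_inv_twoGroupInfo_sub_mul_smul_left (a : K) (h₀ : c₀ - a ≠ 0) (h₁ : c₁ ≠ 0) :
    a • !![1, 0; 0, 0] * (twoGroupInfo c₀ c₁ - a • !![1, 0; 0, 0])⁻¹ * (a • !![1, 0; 0, 0]) =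
      (a ^ 2 / (c₀ - a)) • !![(1 : K), 0; 0, 0] := by
  rw [twoGroupInfo_sub_smul_left, smul_mul_assoc, smul_mul_assoc, mul_smul_comm,
    mul_inv_twoGroupInfo_mul_left h₀ h₁, smul_smul, smul_smul]
  congr 1; ring

theorem smul_mul_inv_twoGroupInfo_sub_mul_smul_right (a : K) (h₀ : c₀ ≠ 0) (h₁ : c₁ - a ≠ 0) :
    a • !![1, 1; 1, 1] * (twoGroupInfo c₀ c₁ - a • !![1, 1; 1, 1])⁻¹ * (a • !![1, 1; 1, 1]) =
      (a ^ 2 / (c₁ - a)) • !![(1 : K), 1; 1, 1] := by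
  rw [twoGroupInfo_sub_smul_right, smul_mul_assoc, smul_mul_assoc, mul_smul_comm,
    mul_inv_twoGroupInfo_mul_right h₀ h₁, smul_smul, smul_smul]
  congr 1; ring

end TwoGroupInfo

theorem div_sub_one_antitoneOn : AntitoneOn (fun x : ℝ => x / (x - 1)) (Set.Ioi 1) := by
  intro x hx y hy hxy
  simp only [Set.mem_Ioi] at hx hy
  rw [div_le_div_iff₀ (by linarith) (by linarith)]
  linarith

theorem AntitoneOn.isGreatest_pair_map_min {α β : Type*} [LinearOrder α] [LinearOrder β]
    {f : α → β} {s : Set α} (hf : AntitoneOn f s) {x y : α} (hx : x ∈ s) (hy : y ∈ s) :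
    IsGreatest {f x, f y} (f (min x y)) := by
  rcases le_total x y with h | h
  · rw [min_eq_left h]
    convert isGreatest_pair using 1
    exact (max_eq_left (hf hx hy h)).symm
  · rw [min_eq_right h]
    convert isGreatest_pair using 1
    exact (max_eq_right (hf hy hx h)).symm

/-- Corollary 1, scalar overcorrection bound: with
`A₀ = a₀·[[1,0],[0,0]]`, `A₁ = a₁·[[1,1],[1,1]]`, `I₀ = N₀·A₀ + N₁·A₁`, and
`B_lev = N₀·A₀(I₀ − A₀)⁻¹A₀ + N₁·A₁(I₀ − A₁)⁻¹A₁`, the real spectrum of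
`I₀⁻¹ (I₀ + B_lev)` is `{N₀/(N₀−1), N₁/(N₁−1)}` and its largest element is
`N_min/(N_min − 1)` for `N_min = min(N₀, N₁)`. -/
theorem scalar_overcorrection_bound
    (a₀ a₁ : ℝ) (ha₀ : 0 < a₀) (ha₁ : 0 < a₁)
    (N₀ N₁ : ℕ) (hN₀ : 2 ≤ N₀) (hN₁ : 2 ≤ N₁)
    (A₀ A₁ I₀ Blev : Matrix (Fin 2) (Fin 2) ℝ)
    (hA₀ : A₀ = a₀ • !![1, 0; 0, 0]) (hA₁ : A₁ = a₁ • !![1, 1; 1, 1])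
    (hI₀ : I₀ = (N₀ : ℝ) • A₀ + (N₁ : ℝ) • A₁)
    (hB : Blev = (N₀ : ℝ) • (A₀ * (I₀ - A₀)⁻¹ * A₀)
        + (N₁ : ℝ) • (A₁ * (I₀ - A₁)⁻¹ * A₁)) :
    spectrum ℝ (I₀⁻¹ * (I₀ + Blev))
        = {(N₀ : ℝ) / ((N₀ : ℝ) - 1), (N₁ : ℝ) / ((N₁ : ℝ) - 1)} ∧
      IsGreatest (spectrum ℝ (I₀⁻¹ * (I₀ + Blev)))
        (((min N₀ N₁ : ℕ) : ℝ) / (((min N₀ N₁ : ℕ) : ℝ) - 1)) := by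
  have hN₀' : (1 : ℝ) < N₀ := by exact_mod_cast hN₀
  have hN₁' : (1 : ℝ) < N₁ := by exact_mod_cast hN₁
  have hI : I₀ = twoGroupInfo (N₀ * a₀) (N₁ * a₁) := by
    rw [hI₀, hA₀, hA₁, twoGroupInfo, smul_smul, smul_smul]
  have hBlev : Blev = twoGroupInfo (N₀ * (a₀ ^ 2 / (N₀ * a₀ - a₀)))
      (N₁ * (a₁ ^ 2 / (N₁ * a₁ - a₁))) := by
    have hw₀ : 0 < N₀ * a₀ - a₀ := by nlinarith
    have hw₁ : 0 < N₁ * a₁ - a₁ := by nlinarith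
    rw [hB, hA₀, hA₁, hI,
      smul_mul_inv_twoGroupInfo_sub_mul_smul_left a₀ hw₀.ne' (by positivity),
      smul_mul_inv_twoGroupInfo_sub_mul_smul_right a₁ (by positivity) hw₁.ne', smul_smul,
      smul_smul, twoGroupInfo]
  have hspec : spectrum ℝ (I₀⁻¹ * (I₀ + Blev))
      = {(N₀ : ℝ) / ((N₀ : ℝ) - 1), (N₁ : ℝ) / ((N₁ : ℝ) - 1)} := by
    rw [hBlev, hI, twoGroupInfo_add, inv_twoGroupInfo_mul_twoGroupInfo (by positivity)
      (by positivity), spectrum_lowerTriangular_fin_two]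
    have eigenvalue {n a : ℝ} (hn : 1 < n) (ha : 0 < a) :
        (n * a + n * (a ^ 2 / (n * a - a))) / (n * a) = n / (n - 1) := by
      have : n - 1 ≠ 0 := by linarith
      rw [show n * a - a = (n - 1) * a by ring]
      field_simp
      ring
    rw [eigenvalue hN₀' ha₀, eigenvalue hN₁' ha₁]
  refine ⟨hspec, ?_⟩
  rw [hspec, Nat.cast_min]
  exact div_sub_one_antitoneOn.isGreatest_pair_map_min hN₀' hN₁'
end

section
/- For clusters i = 1,…,N, let D_i be a real n_i × p matrix, Ṽ_i an invertible real n_i × n_i matrix, and r_i ∈ ℝ^{n_i} a fixed vector; let p ≥ 1, let φ > 0 be real, and set V_i(φ) = φ·Ṽ_i. Define I₀(φ), Δ(φ), d_i(φ), d̄(φ), I₁ᶜ(φ) as the sensitivity matrix, its inverse, the score contributions, their mean, and the mean-centered middle matrix built from V_i(φ), and Ĩ₀ (assumed invertible), Δ̃, Ĩ₁ᶜ the corresponding quantities built from Ṽ_i. With κ(φ) = max{1, (1/p)·trace(Δ(φ) I₁ᶜ(φ))} and C = trace(Δ̃ Ĩ₁ᶜ), one has κ(φ)·Δ(φ) = max{φ,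 C/p}·Δ̃. -/
open scoped Matrix
open Finset

/-!
Scaling every working covariance by `φ` scales the sensitivity matrix by `φ⁻¹`, hence its inverse
`Δ` by `φ`; the score contributions and their mean scale by `φ⁻¹`, so the centered middle matrix
scales by `φ⁻²`. The trace `tr(Δ(φ) I₁ᶜ(φ))` is therefore `C / φ`, and multiplying
`max {1, C / (p φ)}` by `φ > 0` gives `max {φ, C / p}`.
-/

namespace Matrix

variable {n K : Type*} [Fintype n] [DecidableEq n] [Field K]

/-- Unlike `Matrix.inv_smul`, no invertibility of `A` is needed: if `A` is singular, both sides
are the junk value `0`. -/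
theorem inv_smul_of_ne_zero {c : K} (hc : c ≠ 0) (A : Matrix n n K) :
    (c • A)⁻¹ = c⁻¹ • A⁻¹ := by
  by_cases hA : IsUnit A.det
  · have : Invertible c := invertibleOfNonzero hc
    rw [Matrix.inv_smul (A := A) c hA, invOf_eq_inv]
  · have hcA : ¬IsUnit (c • A).det := by
      rw [det_smul, IsUnit.mul_iff]
      exact fun h => hA h.2
    rw [nonsing_inv_apply_not_isUnit _ hA, nonsing_inv_apply_not_isUnit _ hcA, smul_zero]

end Matrix

section Scaling

variable {ι m K : Type*} [Fintype ι] [Field K] {c : K}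

theorem sum_transpose_mul_inv_smul_mul (hc : c ≠ 0) {k : ι → Type*}
    [∀ i, Fintype (k i)] [∀ i, DecidableEq (k i)]
    (D : ∀ i, Matrix (k i) m K) (V : ∀ i, Matrix (k i) (k i) K) :
    ∑ i, (D i)ᵀ * (c • V i)⁻¹ * D i = c⁻¹ • ∑ i, (D i)ᵀ * (V i)⁻¹ * D i := by
  rw [smul_sum]
  refine sum_congr rfl fun i _ => ?_
  rw [Matrix.inv_smul_of_ne_zero hc, Matrix.mul_smul, Matrix.smul_mul]

theorem transpose_mul_inv_smul_mulVec (hc : c ≠ 0) {k : Type*} [Fintype k] [DecidableEq k]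
    (D : Matrix k m K) (V : Matrix k k K) (r : k → K) :
    (Dᵀ * (c • V)⁻¹) *ᵥ r = c⁻¹ • ((Dᵀ * V⁻¹) *ᵥ r) := by
  rw [Matrix.inv_smul_of_ne_zero hc, Matrix.mul_smul, Matrix.smul_mulVec]

theorem sum_vecMulVec_smul_sub_smul {R : Type*} [CommRing R] (a : R) (d : ι → m → R) (e : m → R) :
    ∑ i, Matrix.vecMulVec (a • d i - a • e) (a • d i - a • e)
      = (a * a) • ∑ i, Matrix.vecMulVec (d i - e) (d i - e) := by
  simp only [← smul_sub, Matrix.smul_vecMulVec, Matrix.vecMulVec_smul, smul_sum, smul_smul]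

end Scaling

theorem max_one_mul_inv_mul_mul {φ : ℝ} (hφ : 0 < φ) (a C : ℝ) :
    max 1 (a * (φ⁻¹ * C)) * φ = max φ (a * C) := by
  rw [max_mul_of_nonneg _ _ hφ.le, one_mul]
  field_simp

theorem morel_design_effect_scale_general
    {N p : ℕ} (n : Fin N → ℕ) (φ : ℝ) (hφ : 0 < φ)
    (D : ∀ i, Matrix (Fin (n i)) (Fin p) ℝ)
    (Vt : ∀ i, Matrix (Fin (n i)) (Fin (n i)) ℝ)
    (r : ∀ i, Fin (n i) → ℝ)
    (I₀φ It₀ : Matrix (Fin p) (Fin p) ℝ)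
    (hI₀φ : I₀φ = ∑ i, (D i)ᵀ * (φ • Vt i)⁻¹ * D i)
    (hIt₀ : It₀ = ∑ i, (D i)ᵀ * (Vt i)⁻¹ * D i)
    (Δφ Δt : Matrix (Fin p) (Fin p) ℝ)
    (hΔφ : Δφ = I₀φ⁻¹) (hΔt : Δt = It₀⁻¹)
    (dφ dt : ∀ _ : Fin N, Fin p → ℝ)
    (hdφ : ∀ i, dφ i = ((D i)ᵀ * (φ • Vt i)⁻¹) *ᵥ r i)
    (hdt : ∀ i, dt i = ((D i)ᵀ * (Vt i)⁻¹) *ᵥ r i)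
    (dbarφ dbart : Fin p → ℝ)
    (hdbarφ : dbarφ = (N : ℝ)⁻¹ • ∑ i, dφ i)
    (hdbart : dbart = (N : ℝ)⁻¹ • ∑ i, dt i)
    (I₁cφ It₁c : Matrix (Fin p) (Fin p) ℝ)
    (hI₁cφ : I₁cφ = ∑ i, Matrix.vecMulVec (dφ i - dbarφ) (dφ i - dbarφ))
    (hIt₁c : It₁c = ∑ i, Matrix.vecMulVec (dt i - dbart) (dt i - dbart))
    (κ C : ℝ)
    (hκ : κ = max 1 ((1 / (p : ℝ)) * (Δφ * I₁cφ).trace))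
    (hC : C = (Δt * It₁c).trace) :
    κ • Δφ = max φ (C / (p : ℝ)) • Δt := by
  have hφ0 : φ ≠ 0 := hφ.ne'
  have hΔ : Δφ = φ • Δt := by
    rw [hΔφ, hI₀φ, sum_transpose_mul_inv_smul_mul hφ0, ← hIt₀,
      Matrix.inv_smul_of_ne_zero (inv_ne_zero hφ0), inv_inv, hΔt]
  have hd : ∀ i, dφ i = φ⁻¹ • dt i := fun i => by
    rw [hdφ, hdt, transpose_mul_inv_smul_mulVec hφ0]
  have hdbar : dbarφ = φ⁻¹ • dbart := by
    rw [hdbarφ, hdbart, funext hd, ← smul_sum, smul_comm]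
  have hI₁ : I₁cφ = (φ⁻¹ * φ⁻¹) • It₁c := by
    rw [hI₁cφ, funext hd, hdbar, sum_vecMulVec_smul_sub_smul, hIt₁c]
  have htrace : (Δφ * I₁cφ).trace = φ⁻¹ * C := by
    rw [hΔ, hI₁, Matrix.smul_mul, Matrix.mul_smul, Matrix.trace_smul, Matrix.trace_smul, ← hC,
      smul_eq_mul, smul_eq_mul, ← mul_assoc, mul_inv_cancel_left₀ hφ0]
  rw [hκ, htrace, hΔ, smul_smul, max_one_mul_inv_mul_mul hφ, one_div_mul_eq_div]

/-- Appendix Proposition S1, part (iv): with the Morel design-effect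
factor `κ(φ) = max{1, (1/p)·trace(Δ(φ) I₁ᶜ(φ))}` and `C = trace(Δ̃ Ĩ₁ᶜ)`, one has
`κ(φ)·Δ(φ) = max{φ, C/p}·Δ̃`. -/
theorem morel_design_effect_scale
    {N p : ℕ} (hp : 1 ≤ p) (n : Fin N → ℕ) (φ : ℝ) (hφ : 0 < φ)
    (D : ∀ i, Matrix (Fin (n i)) (Fin p) ℝ)
    (Vt : ∀ i, Matrix (Fin (n i)) (Fin (n i)) ℝ)
    (hVt : ∀ i, IsUnit (Vt i))
    (r : ∀ i, Fin (n i) → ℝ)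
    (I₀φ It₀ : Matrix (Fin p) (Fin p) ℝ)
    (hI₀φ : I₀φ = ∑ i, (D i)ᵀ * (φ • Vt i)⁻¹ * D i)
    (hIt₀ : It₀ = ∑ i, (D i)ᵀ * (Vt i)⁻¹ * D i)
    (hIt₀unit : IsUnit It₀)
    (Δφ Δt : Matrix (Fin p) (Fin p) ℝ)
    (hΔφ : Δφ = I₀φ⁻¹) (hΔt : Δt = It₀⁻¹)
    (dφ dt : ∀ _ : Fin N, Fin p → ℝ)
    (hdφ : ∀ i, dφ i = ((D i)ᵀ * (φ • Vt i)⁻¹) *ᵥ r i)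
    (hdt : ∀ i, dt i = ((D i)ᵀ * (Vt i)⁻¹) *ᵥ r i)
    (dbarφ dbart : Fin p → ℝ)
    (hdbarφ : dbarφ = (N : ℝ)⁻¹ • ∑ i, dφ i)
    (hdbart : dbart = (N : ℝ)⁻¹ • ∑ i, dt i)
    (I₁cφ It₁c : Matrix (Fin p) (Fin p) ℝ)
    (hI₁cφ : I₁cφ = ∑ i, Matrix.vecMulVec (dφ i - dbarφ) (dφ i - dbarφ))
    (hIt₁c : It₁c = ∑ i, Matrix.vecMulVec (dt i - dbart) (dt i - dbart))
    (κ C : ℝ)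
    (hκ : κ = max 1 ((1 / (p : ℝ)) * (Δφ * I₁cφ).trace))
    (hC : C = (Δt * It₁c).trace) :
    κ • Δφ = max φ (C / (p : ℝ)) • Δt :=
  morel_design_effect_scale_general n φ hφ D Vt r I₀φ It₀ hI₀φ hIt₀ Δφ Δt hΔφ hΔt dφ dt hdφ hdt
    dbarφ dbart hdbarφ hdbart I₁cφ It₁c hI₁cφ hIt₁c κ C hκ hC
end
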